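/- Consider the five-dimensional space E₄ = span{1, x, x², x³, x⁶} of functions on [−1,1]. The functions p_{4,0}(x) = 5/56 − (9/28)x + (45/112)x² − (5/28)x³ + (1/112)x⁶, p_{4,1}(x) = 2/7 − (3/7)x − (3/14)x² + (3/7)x³ − (1/14)x⁶, p_{4,2}(x) = 1/4 − (3/8)x² + (1/8)x⁶, p_{4,3}(x) = 2/7 + (3/7)x − (3/14)x² − (3/7)x³ − (1/14)x⁶, p_{4,4}(x) = 5/56 + (9/28)x + (45/112)x² + (5/28)x³ + (1/112)x⁶ form the unique normalized Bernstein basis of E₄ on [−1,1], each p_{4,k} being strictly positive on (−1,1). Moreover x³ = −p_{4,0} + (3/4)p_{4,1} + 0·p_{4,2} − (3/4)p_{4,3} + p_{4,4}, so the operator B₄f = Σ_{k=0}^4 f(γ_{4,k}^{1/3}) p_{4,k} with (γ_{4,0},…,γ_{4,4}) = (−1, 3/4, 0, −3/4, 1) fixes 1 and x³; its node sequence satisfies t_{4,0} < t_{4,3} < t_{4,2} < t_{4,1} < t_{4,4} and is therefore not non-decreasing. -/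

import Mathlib

open Set Filter Topology

noncomputable section

/-- `p k`, `k = 0, …, n`, is a Bernstein basis of the `(n+1)`-dimensional subspace `U` of
`C^n([a,b], ℝ)`: it is a basis of `U` and each `p k` has a zero of order `k` at `a`
(derivatives of order `< k` vanish at `a`, the `k`-th does not) and a zero of order
`n - k` at `b`. -/
def IsBernsteinBasisOf (a b : ℝ) (n : ℕ) (U : Submodule ℝ (ℝ → ℝ))
    (p : Fin (n + 1) → ℝ → ℝ) : Prop :=
  (∀ k, p k ∈ U) ∧ LinearIndependent ℝ p ∧ Submodule.span ℝ (Set.range p) = U ∧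
  ∀ k : Fin (n + 1),
    (∀ j : ℕ, j < (k : ℕ) → iteratedDeriv j (p k) a = 0) ∧
    iteratedDeriv (k : ℕ) (p k) a ≠ 0 ∧
    (∀ j : ℕ, j < n - (k : ℕ) → iteratedDeriv j (p k) b = 0) ∧
    iteratedDeriv (n - (k : ℕ)) (p k) b ≠ 0


/-- The five-dimensional space `E₄ = span{1, x, x², x³, x⁶}`. -/
def E₄ : Submodule ℝ (ℝ → ℝ) :=
  Submodule.span ℝ
    {(fun _ => (1 : ℝ)), (fun x => x), (fun x => x ^ 2), (fun x => x ^ 3), (fun x => x ^ 6)}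

/-- The normalized Bernstein basis of `E₄` on `[-1,1]`. -/
def pE4 : Fin 5 → ℝ → ℝ :=
  ![fun x => 5 / 56 - 9 / 28 * x + 45 / 112 * x ^ 2 - 5 / 28 * x ^ 3 + 1 / 112 * x ^ 6,
    fun x => 2 / 7 - 3 / 7 * x - 3 / 14 * x ^ 2 + 3 / 7 * x ^ 3 - 1 / 14 * x ^ 6,
    fun x => 1 / 4 - 3 / 8 * x ^ 2 + 1 / 8 * x ^ 6,
    fun x => 2 / 7 + 3 / 7 * x - 3 / 14 * x ^ 2 - 3 / 7 * x ^ 3 - 1 / 14 * x ^ 6,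
    fun x => 5 / 56 + 9 / 28 * x + 45 / 112 * x ^ 2 + 5 / 28 * x ^ 3 + 1 / 112 * x ^ 6]

/-- The coordinates of `x³` in the basis `pE4`. -/
def γE4 : Fin 5 → ℝ := ![-1, 3 / 4, 0, -3 / 4, 1]

/-!
Write a member of `E₄` as `c₀ + c₁x + c₂x² + c₃x³ + c₄x⁶`; its derivatives at `±1` are
linear in `c`. For each `k`, the `k` vanishing conditions at `-1` and the `4 - k` at `1` are
independent, so they cut out the line spanned by `p_{4,k}`. A normalized Bernstein basis is
therefore `μ_k p_{4,k}`, and `μ = 1` because the `p_{4,k}` sum to `1` and are linearly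
independent already on `[-1,1]` (five sample points suffice); with `dim E₄ ≤ 5` this also gives the
spanning property. Positivity comes from `p_{4,k} = (1 + x)^k (1 - x)^(4-k) q_k` with `q_k > 0`.
Since `x ↦ x³` is strictly increasing, the nodes are ordered like
`γ`: `-1 < -3/4 < 0 < 3/4 < 1`.
-/

theorem iteratedDeriv_sum_mul_pow {𝕜 ι : Type*} [NontriviallyNormedField 𝕜] (s : Finset ι)
    (c : ι → 𝕜) (e : ι → ℕ) (n : ℕ) (y : 𝕜) :
    iteratedDeriv n (fun x => ∑ i ∈ s, c i * x ^ e i) y =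
      ∑ i ∈ s, c i * (e i).descFactorial n * y ^ (e i - n) := by
  rw [iteratedDeriv_fun_sum fun i _ => by fun_prop]
  simp [mul_assoc]

def expE4 : Fin 5 → ℕ := ![0, 1, 2, 3, 6]

def combE4 (c : Fin 5 → ℝ) (x : ℝ) : ℝ := ∑ i, c i * x ^ expE4 i

theorem E₄_eq_span_range :
    E₄ = Submodule.span ℝ (Set.range fun i (x : ℝ) => x ^ expE4 i) := by
  rw [E₄]
  congr 1
  ext f
  simp [Fin.exists_fin_succ, expE4, eq_comm]

theorem mem_E₄_iff {f : ℝ → ℝ} : f ∈ E₄ ↔ ∃ c, combE4 c = f := by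
  rw [E₄_eq_span_range, Submodule.mem_span_range_iff_exists_fun]
  have (c : Fin 5 → ℝ) : ∑ i, c i • (fun x : ℝ => x ^ expE4 i) = combE4 c := by
    ext x; simp [combE4]
  simp only [this]

theorem finrank_E₄_le : Module.finrank ℝ E₄ ≤ 5 := by
  rw [E₄_eq_span_range]
  exact (finrank_range_le_card _).trans_eq (Fintype.card_fin 5)

instance : FiniteDimensional ℝ E₄ := by
  rw [E₄_eq_span_range]
  exact FiniteDimensional.span_of_finite ℝ (Set.finite_range _)

theorem iteratedDeriv_combE4 (c : Fin 5 → ℝ) (n : ℕ) (y : ℝ) :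
    iteratedDeriv n (combE4 c) y = ∑ i, c i * (expE4 i).descFactorial n * y ^ (expE4 i - n) :=
  iteratedDeriv_sum_mul_pow _ c expE4 n y

def pE4Coeff : Matrix (Fin 5) (Fin 5) ℝ :=
  !![5 / 56, -9 / 28, 45 / 112, -5 / 28, 1 / 112;
     2 / 7, -3 / 7, -3 / 14, 3 / 7, -1 / 14;
     1 / 4, 0, -3 / 8, 0, 1 / 8;
     2 / 7, 3 / 7, -3 / 14, -3 / 7, -1 / 14;
     5 / 56, 9 / 28, 45 / 112, 5 / 28, 1 / 112]

theorem pE4_eq_combE4 (k : Fin 5) : pE4 k = combE4 (pE4Coeff k) := by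
  ext x
  fin_cases k <;> simp [pE4, combE4, pE4Coeff, expE4, Fin.sum_univ_five] <;> ring

theorem pE4_mem_E₄ (k : Fin 5) : pE4 k ∈ E₄ :=
  mem_E₄_iff.2 ⟨_, (pE4_eq_combE4 k).symm⟩

theorem pE4_zero_orders (k : Fin 5) :
    (∀ j : ℕ, j < (k : ℕ) → iteratedDeriv j (pE4 k) (-1) = 0) ∧
    iteratedDeriv (k : ℕ) (pE4 k) (-1) ≠ 0 ∧
    (∀ j : ℕ, j < 4 - (k : ℕ) → iteratedDeriv j (pE4 k) 1 = 0) ∧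
    iteratedDeriv (4 - (k : ℕ)) (pE4 k) 1 ≠ 0 := by
  simp only [pE4_eq_combE4, iteratedDeriv_combE4]
  fin_cases k <;> refine ⟨fun j hj => ?_, ?_, fun j hj => ?_, ?_⟩ <;>
    (try (dsimp at hj; interval_cases j)) <;>
    simp [Fin.sum_univ_five, pE4Coeff, expE4, Nat.descFactorial] <;> norm_num

theorem exists_eq_smul_pE4 (k : Fin 5) {f : ℝ → ℝ} (hf : f ∈ E₄)
    (ha : ∀ j < (k : ℕ), iteratedDeriv j f (-1) = 0)
    (hb : ∀ j < 4 - (k : ℕ), iteratedDeriv j f 1 = 0) : ∃ μ : ℝ, f = μ • pE4 k := by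
  obtain ⟨c, rfl⟩ := mem_E₄_iff.1 hf
  have hc : ∀ i, c i * pE4Coeff k 4 = pE4Coeff k i * c 4 := by
    simp only [iteratedDeriv_combE4, Fin.sum_univ_five, expE4] at ha hb
    fin_cases k <;> dsimp at ha hb <;>
      simp only [Nat.forall_lt_succ_right, Nat.not_lt_zero, IsEmpty.forall_iff, forall_const,
        true_and] at ha hb <;>
      norm_num [Nat.descFactorial] at ha hb <;> cases_type* And <;>
      intro i <;> fin_cases i <;> simp [pE4Coeff] <;> linarith
  have h4 : pE4Coeff k 4 ≠ 0 := by fin_cases k <;> simp [pE4Coeff]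
  refine ⟨c 4 / pE4Coeff k 4, funext fun x => ?_⟩
  rw [Pi.smul_apply, pE4_eq_combE4, smul_eq_mul, div_mul_eq_mul_div, eq_div_iff h4]
  simp [combE4, Fin.sum_univ_five, expE4]
  linear_combination hc 0 + x * hc 1 + x ^ 2 * hc 2 + x ^ 3 * hc 3

def pE4Cofactor : Fin 5 → ℝ → ℝ :=
  ![fun x => ((x + 2) ^ 2 + 6) / 112, fun x => ((x + 1) ^ 2 + 3) / 14, fun x => (x ^ 2 + 2) / 8,
    fun x => ((x - 1) ^ 2 + 3) / 14, fun x => ((x - 2) ^ 2 + 6) / 112]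

theorem pE4Cofactor_pos (k : Fin 5) (x : ℝ) : 0 < pE4Cofactor k x := by
  fin_cases k <;> simp [pE4Cofactor] <;> positivity

theorem pE4_eq_mul_pE4Cofactor (k : Fin 5) (x : ℝ) :
    pE4 k x = (1 + x) ^ (k : ℕ) * (1 - x) ^ (4 - (k : ℕ)) * pE4Cofactor k x := by
  fin_cases k <;> simp [pE4, pE4Cofactor] <;> ring

theorem pE4_nonneg (k : Fin 5) {x : ℝ} (hx : x ∈ Icc (-1 : ℝ) 1) : 0 ≤ pE4 k x := by
  rw [pE4_eq_mul_pE4Cofactor]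
  have h₁ : 0 ≤ 1 + x := by linarith [hx.1]
  have h₂ : 0 ≤ 1 - x := by linarith [hx.2]
  exact mul_nonneg (by positivity) (pE4Cofactor_pos k x).le

theorem pE4_pos (k : Fin 5) {x : ℝ} (hx : x ∈ Ioo (-1 : ℝ) 1) : 0 < pE4 k x := by
  rw [pE4_eq_mul_pE4Cofactor]
  have h₁ : 0 < 1 + x := by linarith [hx.1]
  have h₂ : 0 < 1 - x := by linarith [hx.2]
  exact mul_pos (by positivity) (pE4Cofactor_pos k x)

theorem sum_pE4 (x : ℝ) : ∑ k, pE4 k x = 1 := by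
  simp [Fin.sum_univ_five, pE4]
  ring

theorem sum_γE4_mul_pE4 (x : ℝ) : ∑ k, γE4 k * pE4 k x = x ^ 3 := by
  simp [Fin.sum_univ_five, pE4, γE4]
  ring

theorem eq_of_sum_mul_pE4_eq {g h : Fin 5 → ℝ}
    (H : ∀ x ∈ Icc (-1 : ℝ) 1, ∑ k, g k * pE4 k x = ∑ k, h k * pE4 k x) : g = h := by
  have e₁ := H (-1) (by norm_num)
  have e₂ := H (-1 / 2) (by norm_num)
  have e₃ := H 0 (by norm_num)
  have e₄ := H (1 / 2) (by norm_num)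
  have e₅ := H 1 (by norm_num)
  simp [Fin.sum_univ_five, pE4] at e₁ e₂ e₃ e₄ e₅
  ext k
  fin_cases k <;> dsimp <;> linarith

theorem linearIndependent_pE4 : LinearIndependent ℝ pE4 := by
  refine Fintype.linearIndependent_iff.2 fun g hg => congrFun (eq_of_sum_mul_pE4_eq (h := 0) ?_)
  intro x _
  simpa using congrFun hg x

theorem span_pE4 : Submodule.span ℝ (range pE4) = E₄ := by
  refine Submodule.eq_of_le_of_finrank_le
    (Submodule.span_le.2 (range_subset_iff.2 pE4_mem_E₄)) ?_
  rw [finrank_span_eq_card linearIndependent_pE4, Fintype.card_fin]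
  exact finrank_E₄_le

theorem isBernsteinBasisOf_pE4 : IsBernsteinBasisOf (-1) 1 4 E₄ pE4 :=
  ⟨pE4_mem_E₄, linearIndependent_pE4, span_pE4, pE4_zero_orders⟩

theorem eq_pE4_of_isBernsteinBasisOf {r : Fin 5 → ℝ → ℝ}
    (hr : IsBernsteinBasisOf (-1) 1 4 E₄ r)
    (hsum : ∀ x ∈ Icc (-1 : ℝ) 1, ∑ k, r k x = 1) : r = pE4 := by
  choose μ hμ using fun k => exists_eq_smul_pE4 k (hr.1 k) (hr.2.2.2 k).1 (hr.2.2.2 k).2.2.1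
  have hμ1 : μ = 1 := eq_of_sum_mul_pE4_eq fun x hx => by
    simpa [hμ, sum_pE4] using hsum x hx
  ext k x
  simp [hμ k, hμ1]

theorem nodes_of_pow_three_eq_γE4 {t : Fin 5 → ℝ} (ht : ∀ k, t k ^ 3 = γE4 k) :
    (∀ k, t k ∈ Icc (-1 : ℝ) 1) ∧ t 0 < t 3 ∧ t 3 < t 2 ∧ t 2 < t 1 ∧ t 1 < t 4 := by
  have hcube : StrictMono fun a : ℝ => a ^ 3 := Odd.strictMono_pow (by decide)
  have hlt {i j : Fin 5} (h : γE4 i < γE4 j) : t i < t j := hcube.lt_iff_lt.1 (by simpa [ht])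
  refine ⟨fun k => ⟨hcube.le_iff_le.1 ?_, hcube.le_iff_le.1 ?_⟩,
    hlt ?_, hlt ?_, hlt ?_, hlt ?_⟩ <;>
    (try fin_cases k) <;>
    norm_num [ht, γE4, Matrix.cons_val_two, Matrix.cons_val_three, Matrix.cons_val_four]

theorem e4_normalized_bernstein_basis_and_nonmonotone_nodes :
    IsBernsteinBasisOf (-1) 1 4 E₄ pE4 ∧
    (∀ k, ∀ x ∈ Set.Icc (-1 : ℝ) 1, 0 ≤ pE4 k x) ∧
    (∀ k, ∀ x ∈ Set.Ioo (-1 : ℝ) 1, 0 < pE4 k x) ∧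
    (∀ x ∈ Set.Icc (-1 : ℝ) 1, ∑ k, pE4 k x = 1) ∧
    (∀ r : Fin 5 → ℝ → ℝ, IsBernsteinBasisOf (-1) 1 4 E₄ r →
      (∀ k, ∀ x ∈ Set.Icc (-1 : ℝ) 1, 0 ≤ r k x) →
      (∀ x ∈ Set.Icc (-1 : ℝ) 1, ∑ k, r k x = 1) →
      ∀ k, ∀ x ∈ Set.Icc (-1 : ℝ) 1, r k x = pE4 k x) ∧
    (∀ x : ℝ, x ^ 3 = ∑ k, γE4 k * pE4 k x) ∧
    (∀ t : Fin 5 → ℝ, (∀ k, (t k) ^ 3 = γE4 k) →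
      (∀ k, t k ∈ Set.Icc (-1 : ℝ) 1) ∧
      (∀ x : ℝ, ∑ k, pE4 k x = 1) ∧
      (∀ x : ℝ, ∑ k, (t k) ^ 3 * pE4 k x = x ^ 3) ∧
      (t 0 < t 3 ∧ t 3 < t 2 ∧ t 2 < t 1 ∧ t 1 < t 4) ∧
      ¬ Monotone t) := by
  refine ⟨isBernsteinBasisOf_pE4, fun k _ => pE4_nonneg k, fun k _ => pE4_pos k,
    fun x _ => sum_pE4 x, fun r hr _ hsum k x _ => by rw [eq_pE4_of_isBernsteinBasisOf hr hsum],
    fun x => (sum_γE4_mul_pE4 x).symm, fun t ht => ?_⟩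
  obtain ⟨hIcc, hlt⟩ := nodes_of_pow_three_eq_γE4 ht
  refine ⟨hIcc, sum_pE4, fun x => by simp only [ht, sum_γE4_mul_pE4], hlt, fun hmono => ?_⟩
  exact (hmono (show (1 : Fin 5) ≤ 2 by decide)).not_gt hlt.2.2.1
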